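/- The orbit S_{(δ₁,...,δ_{p−1})} of points P = (x₁,...,x_p) in the grid ∏{0,...,mᵢ} with index I(P) = (δ₁,...,δ_{p−1}) has cardinality ∏_{i=1}^p ((mᵢ+1) + (−1)^{[δ_{i−1}]₂}·[mᵢ+1]₂)/2 + ∏_{i=1}^p ((mᵢ+1) + (−1)^{[δ_{i−1}+1]₂}·[mᵢ+1]₂)/2, where δ₀ = 0 and [a]₂ = a mod 2. -/

import Mathlib

/-!
Fixing the parity `b` of `x₁`, the condition `I(P) = δ` says exactly that each `xᵢ` has parity
`δᵢ + b` (with `δ₁ = 0`). So the orbit is the disjoint union, over `b ∈ {0, 1}`, of two boxes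
of points with prescribed coordinate parities, and `{0, …, m}` contains
`((m + 1) + (-1)^e [m + 1]₂) / 2` integers of parity `e`.
-/

open Finset

theorem card_filter_range_mod_two_eq (n e : ℕ) :
    (#{k ∈ range n | k % 2 = e % 2} : ℤ) = (n + (-1) ^ e * ((n : ℤ) % 2)) / 2 := by
  induction n with
  | zero => simp
  | succ n ih =>
    rw [range_add_one, filter_insert]
    have hn : n ∉ {k ∈ range n | k % 2 = e % 2} := by simp
    rcases Nat.even_or_odd e with he | he <;>
      [have := Nat.even_iff.1 he; have := Nat.odd_iff.1 he] <;>
      simp only [he.neg_one_pow] at ih ⊢ <;>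
      by_cases h : n % 2 = e % 2 <;>
      simp only [h, if_true, if_false, card_insert_of_notMem hn] <;> push_cast <;> omega

section ParityBox

variable {ι : Type*} [Fintype ι] [DecidableEq ι]

def parityBox (s : ι → Finset ℕ) (δ : ι → ℕ) (b : ℕ) : Finset (ι → ℕ) :=
  Fintype.piFinset fun i => {k ∈ s i | k % 2 = (δ i + b) % 2}

theorem card_parityBox (s : ι → Finset ℕ) (δ : ι → ℕ) (b : ℕ) :
    #(parityBox s δ b) = ∏ i, #{k ∈ s i | k % 2 = (δ i + b) % 2} :=
  Fintype.card_piFinset _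

theorem disjoint_parityBox_zero_one [Nonempty ι] (s : ι → Finset ℕ) (δ : ι → ℕ) :
    Disjoint (parityBox s δ 0) (parityBox s δ 1) := by
  refine disjoint_left.2 fun x h₀ h₁ => ?_
  obtain ⟨i⟩ := ‹Nonempty ι›
  have e₀ := (mem_filter.1 (Fintype.mem_piFinset.1 h₀ i)).2
  have e₁ := (mem_filter.1 (Fintype.mem_piFinset.1 h₁ i)).2
  omega

theorem filter_index_eq_parityBox_union (s : ι → Finset ℕ) (δ : ι → ℕ) (i₀ : ι)
    [DecidablePred fun x : ι → ℕ => ∀ j, (x i₀ + x j) % 2 = δ j]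
    (hδ₀ : δ i₀ = 0) (hδ : ∀ i, δ i ≤ 1) :
    {x ∈ Fintype.piFinset s | ∀ j, (x i₀ + x j) % 2 = δ j} =
      parityBox s δ 0 ∪ parityBox s δ 1 := by
  ext x
  simp only [parityBox, mem_filter, mem_union, Fintype.mem_piFinset]
  constructor
  · rintro ⟨hs, hx⟩
    rcases Nat.mod_two_eq_zero_or_one (x i₀) with h | h
    · exact .inl fun j => ⟨hs j, by have := hx j; have := hδ j; omega⟩
    · exact .inr fun j => ⟨hs j, by have := hx j; have := hδ j; omega⟩
  · rintro (hx | hx) <;>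
    · refine ⟨fun i => (hx i).1, fun j => ?_⟩
      have := (hx i₀).2
      have := (hx j).2
      have := hδ j
      omega

end ParityBox

theorem orbit_cardinality (p : ℕ) (hp : 2 ≤ p) (m : Fin p → ℕ)
    (δ : Fin p → ℕ) (hδ0 : δ ⟨0, by omega⟩ = 0) (hδ : ∀ i, δ i ≤ 1) :
    (((Fintype.piFinset (fun i => Finset.range (m i + 1))).filter
        (fun x : Fin p → ℕ => ∀ j, (x ⟨0, by omega⟩ + x j) % 2 = δ j)).card : ℤ) =
      (∏ i, (((m i : ℤ) + 1) + (-1) ^ (δ i) * ((m i + 1) % 2)) / 2) +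
      (∏ i, (((m i : ℤ) + 1) + (-1) ^ (δ i + 1) * ((m i + 1) % 2)) / 2) := by
  have : Nonempty (Fin p) := ⟨⟨0, by omega⟩⟩
  rw [filter_index_eq_parityBox_union (fun i => range (m i + 1)) δ ⟨0, by omega⟩ hδ0 hδ,
    card_union_of_disjoint (disjoint_parityBox_zero_one _ δ), card_parityBox, card_parityBox]
  push_cast [card_filter_range_mod_two_eq, add_zero]
  rfl
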